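/- Existence of a piecewise affine optimal policy (Lemma 1, policy part): under the same assumptions — g : ℝ^n × ℝ^m → ℝ and V : ℝ^n → ℝ continuous piecewise affine, γ ≥ 0, W a finite set with probability weights p_w ≥ 0 summing to 1, f_w : ℝ^n × ℝ^m → ℝ^n affine for each w ∈ W, and U ⊆ ℝ^m a nonempty compact polyhedron — there exists a function μ : ℝ^n → ℝ^m and finitely many affine maps μ₁, …, μ_r : ℝ^n → ℝ^m such that for every x ∈ ℝ^n: μ(x) ∈ U, the objective Σ_{w ∈ W} p_w · ( g(x, μ(x)) + γ · V(f_w(x, μ(x))) ) equals max_{u ∈ U} Σ_{w ∈ W} p_w · ( g(x, u) + γ · V(f_w(x, u)) ), and μ(x) = μ_j(x) for some j ∈ {1, …, r}. In other words, when the value function is piecewise linear, an optimal policy can be chosen piecewise linear. -/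

import Mathlib

/-- A function `h : ℝ^d → ℝ` is continuous piecewise affine if it is continuous and
there are finitely many affine functions `gᵢ(x) = ⟨aᵢ, x⟩ + cᵢ` such that for every `x`,
`h x` equals `gᵢ x` for some `i`. -/
def IsCPWA {d : ℕ} (h : (Fin d → ℝ) → ℝ) : Prop :=
  Continuous h ∧ ∃ (r : ℕ) (a : Fin r → Fin d → ℝ) (c : Fin r → ℝ),
    ∀ x : Fin d → ℝ, ∃ i : Fin r, h x = (∑ j, a i j * x j) + c i

/-- A function `g : ℝ^n × ℝ^m → ℝ` is continuous piecewise affine if it is continuous and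
there are finitely many affine functions `gᵢ(x, u) = ⟨aᵢ, x⟩ + ⟨bᵢ, u⟩ + cᵢ` such that for
every `(x, u)`, `g x u` equals `gᵢ (x, u)` for some `i`. -/
def IsCPWA2 {n m : ℕ} (g : (Fin n → ℝ) → (Fin m → ℝ) → ℝ) : Prop :=
  Continuous (fun p : (Fin n → ℝ) × (Fin m → ℝ) => g p.1 p.2) ∧
  ∃ (r : ℕ) (a : Fin r → Fin n → ℝ) (b : Fin r → Fin m → ℝ) (c : Fin r → ℝ),
    ∀ (x : Fin n → ℝ) (u : Fin m → ℝ), ∃ i : Fin r,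
      g x u = (∑ j, a i j * x j) + (∑ j, b i j * u j) + c i

/-!
The Bellman objective `J x u` is continuous in `u` and agrees everywhere with one of finitely many
affine maps of `(x, u)`. Fix `x`. Among the maximizers of `J x` on the compact polyhedron `U`,
pick one, `u`, whose set of tight forms (active constraints, and pairs of pieces that coincide at
`u`) is maximal for inclusion. If a direction `d ≠ 0` were annihilated by the linear parts of all
tight forms, then near `u` the function `J x` would be affine along `d` (only pieces active at `u`
survive, and they have the same slope along `d`), hence constant by maximality; sliding `u` along
`d` to the end of the segment of maximizers would make a new form tight, contradicting the choice
of `u`. So `u` is the unique solution of its tight equations, a linear system whose coefficients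
do not depend on `x` and whose right-hand sides are affine in `x`: `u = σ_S x` for an affine map
`σ_S` determined by the tight set `S`, and there are finitely many such sets.
-/

open Set Filter Topology Pointwise

section PiecewiseAffine

variable {P Q : Type*} [AddCommGroup P] [Module ℝ P] [AddCommGroup Q] [Module ℝ Q]

def IsPiecewiseAffine (h : P → ℝ) : Prop :=
  ∃ s : Set (P →ᵃ[ℝ] ℝ), s.Finite ∧ ∀ z, ∃ φ ∈ s, h z = φ z

theorem isPiecewiseAffine_const (c : ℝ) : IsPiecewiseAffine fun _ : P => c :=
  ⟨{AffineMap.const ℝ P c}, finite_singleton _, fun _ => ⟨_, rfl, rfl⟩⟩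

namespace IsPiecewiseAffine

variable {h h' : P → ℝ}

theorem add (hh : IsPiecewiseAffine h) (hh' : IsPiecewiseAffine h') :
    IsPiecewiseAffine fun z => h z + h' z := by
  obtain ⟨s, hs, hsh⟩ := hh
  obtain ⟨s', hs', hsh'⟩ := hh'
  refine ⟨s + s', hs.add hs', fun z => ?_⟩
  obtain ⟨φ, hφ, hz⟩ := hsh z
  obtain ⟨φ', hφ', hz'⟩ := hsh' z
  exact ⟨φ + φ', add_mem_add hφ hφ', by simp [hz, hz']⟩

theorem const_mul (hh : IsPiecewiseAffine h) (c : ℝ) : IsPiecewiseAffine fun z => c * h z := by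
  obtain ⟨s, hs, hsh⟩ := hh
  refine ⟨c • s, hs.smul_set, fun z => ?_⟩
  obtain ⟨φ, hφ, hz⟩ := hsh z
  exact ⟨c • φ, smul_mem_smul_set hφ, by simp [hz]⟩

theorem comp (hh : IsPiecewiseAffine h) (f : Q →ᵃ[ℝ] P) : IsPiecewiseAffine (h ∘ f) := by
  obtain ⟨s, hs, hsh⟩ := hh
  refine ⟨(fun φ => φ.comp f) '' s, hs.image _, fun z => ?_⟩
  obtain ⟨φ, hφ, hz⟩ := hsh (f z)
  exact ⟨φ.comp f, mem_image_of_mem _ hφ, hz⟩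

theorem sum {α : Type*} (t : Finset α) {H : α → P → ℝ} (hH : ∀ a ∈ t, IsPiecewiseAffine (H a)) :
    IsPiecewiseAffine fun z => ∑ a ∈ t, H a z := by
  classical
  induction t using Finset.induction_on with
  | empty => simpa using isPiecewiseAffine_const 0
  | insert a t ha ih =>
    simp only [Finset.sum_insert ha]
    exact (hH a (Finset.mem_insert_self a t)).add
      (ih fun b hb => hH b (Finset.mem_insert_of_mem hb))

end IsPiecewiseAffine

end PiecewiseAffine

theorem IsCPWA.isPiecewiseAffine {d : ℕ} {h : (Fin d → ℝ) → ℝ} (hh : IsCPWA h) :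
    IsPiecewiseAffine h := by
  obtain ⟨-, r, a, c, hac⟩ := hh
  let φ : Fin r → (Fin d → ℝ) →ᵃ[ℝ] ℝ := fun i =>
    (dotProductBilin ℝ ℝ (a i)).toAffineMap + AffineMap.const ℝ _ (c i)
  refine ⟨range φ, finite_range φ, fun x => ?_⟩
  obtain ⟨i, hi⟩ := hac x
  exact ⟨φ i, mem_range_self i, by simp [φ, hi, dotProduct]⟩

theorem IsCPWA2.isPiecewiseAffine {n m : ℕ} {g : (Fin n → ℝ) → (Fin m → ℝ) → ℝ}
    (hg : IsCPWA2 g) : IsPiecewiseAffine fun z : (Fin n → ℝ) × (Fin m → ℝ) => g z.1 z.2 := by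
  obtain ⟨-, r, a, b, c, habc⟩ := hg
  let φ : Fin r → (Fin n → ℝ) × (Fin m → ℝ) →ᵃ[ℝ] ℝ := fun i =>
    ((dotProductBilin ℝ ℝ (a i)).comp (LinearMap.fst ℝ _ _) +
      (dotProductBilin ℝ ℝ (b i)).comp (LinearMap.snd ℝ _ _)).toAffineMap +
      AffineMap.const ℝ _ (c i)
  refine ⟨range φ, finite_range φ, fun z => ?_⟩
  obtain ⟨i, hi⟩ := habc z.1 z.2
  exact ⟨φ i, mem_range_self i, by simp [φ, hi, dotProduct]⟩

theorem AffineMap.apply_add_smul {k E : Type*} [Ring k] [AddCommGroup E] [Module k E]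
    (α : E →ᵃ[k] k) (u d : E) (t : k) : α (u + t • d) = α u + t * α.linear d := by
  rw [add_comm u, ← vadd_eq_add, α.map_vadd, vadd_eq_add, α.linear.map_smul, smul_eq_mul,
    add_comm]

section Polyhedron

variable {E : Type*} [AddCommGroup E] [Module ℝ E] {ι K : Type*}

def polyhedron (a : ι → E →ᵃ[ℝ] ℝ) : Set E := {z | ∀ c, a c z ≤ 0}

/-- The form `.inl c` vanishes where constraint `c` is active, the form `.inr (k, l)` where the
pieces `φ k` and `φ l` agree. -/
def tightForms (a : ι → E →ᵃ[ℝ] ℝ) (φ : K → E →ᵃ[ℝ] ℝ) : ι ⊕ K × K → E →ᵃ[ℝ] ℝ :=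
  Sum.elim a fun kl => φ kl.1 - φ kl.2

theorem tightForms_comp {F : Type*} [AddCommGroup F] [Module ℝ F] (a : ι → E →ᵃ[ℝ] ℝ)
    (φ : K → E →ᵃ[ℝ] ℝ) (g : F →ᵃ[ℝ] E) (i : ι ⊕ K × K) :
    tightForms (fun c => (a c).comp g) (fun k => (φ k).comp g) i = (tightForms a φ i).comp g := by
  rcases i with c | ⟨k, l⟩
  · rfl
  · ext; simp [tightForms]

end Polyhedron

section Maximizer

variable {E : Type*} [NormedAddCommGroup E] [NormedSpace ℝ E] {ι K : Type*}
  {a : ι → E →ᵃ[ℝ] ℝ} {φ : K → E →ᵃ[ℝ] ℝ} {F : E → ℝ} {u d : E}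

theorem eventually_add_smul_mem_polyhedron [Finite ι] (hu : u ∈ polyhedron a)
    (hd : ∀ c, a c u = 0 → (a c).linear d = 0) :
    ∀ᶠ t in 𝓝 (0 : ℝ), u + t • d ∈ polyhedron a := by
  simp only [polyhedron, mem_ofPred_eq, eventually_all]
  intro c
  rcases (hu c).eq_or_lt with htight | hslack
  · exact Eventually.of_forall fun t => by simp [AffineMap.apply_add_smul, htight, hd c htight]
  · have hcont : Continuous fun t : ℝ => a c u + t * (a c).linear d := by fun_prop
    filter_upwards [(hcont.tendsto 0).eventually_le_const (by simpa using hslack)] with t ht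
    rwa [AffineMap.apply_add_smul]

theorem exists_eventually_add_smul_eq [Finite K] (hF : Continuous F)
    (hφ : ∀ z, ∃ k, F z = φ k z) (hd : ∀ k l, φ k u = φ l u → (φ k).linear d = (φ l).linear d) :
    ∃ s, ∀ᶠ t in 𝓝 (0 : ℝ), F (u + t • d) = F u + t * s := by
  obtain ⟨k₀, hk₀⟩ := hφ u
  have hactive : ∀ᶠ t in 𝓝 (0 : ℝ), ∀ k, F (u + t • d) = φ k (u + t • d) → φ k u = F u := by
    rw [eventually_all]
    intro k
    by_cases hk : φ k u = F u
    · exact Eventually.of_forall fun _ _ => hk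
    · have hcont : Continuous fun t : ℝ => F (u + t • d) - (φ k u + t * (φ k).linear d) := by
        fun_prop
      have h0 : F u - φ k u ≠ 0 := sub_ne_zero.mpr (Ne.symm hk)
      filter_upwards [hcont.continuousAt.eventually_ne (by simpa using h0)] with t ht hFt
      rw [hFt, AffineMap.apply_add_smul, sub_self] at ht
      exact absurd rfl ht
  refine ⟨(φ k₀).linear d, ?_⟩
  filter_upwards [hactive] with t ht
  obtain ⟨k, hk⟩ := hφ (u + t • d)
  have hku := ht k hk
  rw [hk, AffineMap.apply_add_smul, hku, hd k k₀ (hku.trans hk₀)]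

theorem eventually_add_smul_mem_polyhedron_and_eq [Finite ι] [Finite K] (hF : Continuous F)
    (hφ : ∀ z, ∃ k, F z = φ k z) (hu : u ∈ polyhedron a) (hmax : IsMaxOn F (polyhedron a) u)
    (hd : ∀ i, tightForms a φ i u = 0 → (tightForms a φ i).linear d = 0) :
    ∀ᶠ t in 𝓝 (0 : ℝ), u + t • d ∈ polyhedron a ∧ F (u + t • d) = F u := by
  have hfeas := eventually_add_smul_mem_polyhedron hu fun c => hd (.inl c)
  obtain ⟨s, hs⟩ := exists_eventually_add_smul_eq hF hφ fun k l hkl => by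
    simpa [tightForms, sub_eq_zero] using hd (.inr (k, l)) (by simpa [tightForms, sub_eq_zero])
  -- along the line `F` is affine near `u`, so maximality at `u` kills the slope
  have hloc : IsLocalMax (fun t : ℝ => F u + t * s) 0 := by
    filter_upwards [hfeas, hs] with t ht hst
    simpa [← hst] using isMaxOn_iff.mp hmax _ ht
  have hs0 : s = 0 := hloc.hasDerivAt_eq_zero <| by
    simpa using ((hasDerivAt_id (0 : ℝ)).mul_const s).const_add (F u)
  filter_upwards [hfeas, hs] with t ht hst
  exact ⟨ht, by rw [hst, hs0, mul_zero, add_zero]⟩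

theorem exists_isGreatest_level_on_line {U : Set E} (hF : Continuous F) (hU : IsCompact U)
    (hu : u ∈ U) (hd : d ≠ 0) :
    ∃ T, IsGreatest {t : ℝ | u + t • d ∈ U ∧ F (u + t • d) = F u} T := by
  have hline : IsClosedEmbedding fun t : ℝ => u + t • d :=
    (Homeomorph.addLeft u).isClosedEmbedding.comp (isClosedEmbedding_smul_left hd)
  have hlevel : IsCompact (U ∩ {z | F z = F u}) := hU.inter_right (isClosed_eq hF continuous_const)
  exact (hline.isCompact_preimage hlevel).exists_isGreatest ⟨0, by simpa using hu⟩

theorem exists_isMaxOn_polyhedron_tight_kernel_trivial [Finite ι] [Finite K] (hF : Continuous F)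
    (hφ : ∀ z, ∃ k, F z = φ k z) (hU : IsCompact (polyhedron a)) (hne : (polyhedron a).Nonempty) :
    ∃ u ∈ polyhedron a, IsMaxOn F (polyhedron a) u ∧
      ∀ d, (∀ i, tightForms a φ i u = 0 → (tightForms a φ i).linear d = 0) → d = 0 := by
  obtain ⟨u₀, hu₀, hmax₀⟩ := hU.exists_isMaxOn hne hF.continuousOn
  obtain ⟨u, ⟨hu, hmax⟩, hmaximal⟩ := Set.Finite.exists_maximalFor'
    (fun u => {i | tightForms a φ i u = 0}) {u | u ∈ polyhedron a ∧ IsMaxOn F (polyhedron a) u}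
    (Set.toFinite _) ⟨u₀, hu₀, hmax₀⟩
  refine ⟨u, hu, hmax, fun d hd => by_contra fun hd0 => ?_⟩
  -- slide along `d` as far as the maximal value persists; no new form can become tight there
  obtain ⟨T, ⟨hT, hFT⟩, hTmax⟩ := exists_isGreatest_level_on_line hF hU hu hd0
  have htight : {i | tightForms a φ i u = 0} ⊆ {i | tightForms a φ i (u + T • d) = 0} :=
    fun i hi => by rw [mem_ofPred_eq, AffineMap.apply_add_smul, hi, hd i hi, mul_zero, add_zero]
  have hmax' : IsMaxOn F (polyhedron a) (u + T • d) := by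
    rw [isMaxOn_iff, hFT]
    exact isMaxOn_iff.mp hmax
  have hd' : ∀ i, tightForms a φ i (u + T • d) = 0 → (tightForms a φ i).linear d = 0 :=
    fun i hi => hd i (hmaximal ⟨hT, hmax'⟩ htight hi)
  obtain ⟨s, ⟨hsU, hsF⟩, hs⟩ :=
    ((eventually_add_smul_mem_polyhedron_and_eq hF hφ hT hmax' hd').filter_mono
      nhdsWithin_le_nhds |>.and self_mem_nhdsWithin).exists (f := 𝓝[>] (0 : ℝ))
  have hTs : T + s ∈ {t : ℝ | u + t • d ∈ polyhedron a ∧ F (u + t • d) = F u} := by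
    simp only [mem_ofPred_eq, add_smul, ← add_assoc]
    exact ⟨hsU, hsF.trans hFT⟩
  linarith [hTmax hTs, show (0 : ℝ) < s from hs]

end Maximizer

section Parametric

variable {ι : Type*}

theorem exists_affineMap_eq_of_forall_eq_zero {k X E : Type*} [Field k] [AddCommGroup X]
    [Module k X] [AddCommGroup E] [Module k E] (Ψ : ι → X × E →ᵃ[k] k) (S : Set ι)
    (hS : ∀ d, (∀ i ∈ S, (Ψ i).linear (0, d) = 0) → d = 0) :
    ∃ σ : X →ᵃ[k] E, ∀ x u, (∀ i ∈ S, Ψ i (x, u) = 0) → u = σ x := by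
  let L : E →ₗ[k] S → k := LinearMap.pi fun i => (Ψ i).linear ∘ₗ LinearMap.inr k X E
  have hL : LinearMap.ker L = ⊥ :=
    LinearMap.ker_eq_bot'.mpr fun d hd => hS d fun i hi => congr_fun hd ⟨i, hi⟩
  obtain ⟨G, hG⟩ := L.exists_leftInverse_of_injective hL
  let ρ : X →ᵃ[k] S → k :=
    AffineMap.pi fun i => -(Ψ i).comp (LinearMap.inl k X E).toAffineMap
  refine ⟨G.toAffineMap.comp ρ, fun x u hu => ?_⟩
  have hLu : L u = ρ x := by
    funext i
    have hsplit := (Ψ i).map_vadd (x, 0) (0, u)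
    simp only [vadd_eq_add, Prod.mk_add_mk, zero_add, add_zero, hu i i.2] at hsplit
    simp only [L, ρ, LinearMap.pi_apply, LinearMap.coe_comp, LinearMap.coe_inr,
      Function.comp_apply, AffineMap.pi_apply, AffineMap.coe_neg, AffineMap.coe_comp,
      LinearMap.coe_toAffineMap, LinearMap.coe_inl, Pi.neg_apply]
    exact eq_neg_of_add_eq_zero_left hsplit.symm
  calc u = G (L u) := (LinearMap.congr_fun hG u).symm
    _ = G.toAffineMap.comp ρ x := by rw [hLu]; rfl

theorem exists_affine_selection_isMaxOn {X E : Type*} [AddCommGroup X] [Module ℝ X]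
    [NormedAddCommGroup E] [NormedSpace ℝ E] [Finite ι]
    {J : X → E → ℝ} (hJ : IsPiecewiseAffine fun z : X × E => J z.1 z.2)
    (hJc : ∀ x, Continuous (J x)) {a : ι → E →ᵃ[ℝ] ℝ} (hU : IsCompact (polyhedron a))
    (hne : (polyhedron a).Nonempty) :
    ∃ (μ : X → E) (r : ℕ) (μs : Fin r → X →ᵃ[ℝ] E), ∀ x,
      μ x ∈ polyhedron a ∧ IsMaxOn (J x) (polyhedron a) (μ x) ∧ ∃ j, μ x = μs j x := by
  obtain ⟨s, hs, hJs⟩ := hJ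
  have : Finite s := hs.to_subtype
  let slice (x : X) : E →ᵃ[ℝ] X × E := (AffineMap.const ℝ E x).prod (AffineMap.id ℝ E)
  let Ψ := tightForms (fun c => (a c).comp AffineMap.snd) (Subtype.val : s → X × E →ᵃ[ℝ] ℝ)
  have hvertex : ∀ x, ∃ u ∈ polyhedron a, IsMaxOn (J x) (polyhedron a) u ∧
      ∀ d, (∀ i, Ψ i (x, u) = 0 → (Ψ i).linear (0, d) = 0) → d = 0 := by
    intro x
    have := exists_isMaxOn_polyhedron_tight_kernel_trivial
      (a := fun c => ((a c).comp AffineMap.snd).comp (slice x))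
      (φ := fun k : s => k.1.comp (slice x)) (hJc x)
      (fun u => by obtain ⟨φ, hφ, h⟩ := hJs (x, u); exact ⟨⟨φ, hφ⟩, h⟩) hU hne
    simp only [tightForms_comp] at this
    exact this
  choose μ hμU hμmax hμker using hvertex
  let Determining := {S : Set (ι ⊕ s × s) // ∀ d, (∀ i ∈ S, (Ψ i).linear (0, d) = 0) → d = 0}
  choose σ hσ using fun S : Determining => exists_affineMap_eq_of_forall_eq_zero Ψ S.1 S.2
  obtain ⟨r, ⟨e⟩⟩ := Finite.exists_equiv_fin Determining
  refine ⟨μ, r, fun j => σ (e.symm j), fun x => ?_⟩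
  let S : Determining := ⟨{i | Ψ i (x, μ x) = 0}, hμker x⟩
  refine ⟨hμU x, hμmax x, e S, ?_⟩
  simpa using hσ S x (μ x) fun i hi => hi

end Parametric

theorem bellman_pwa_optimal_policy_general {n m : ℕ}
    (g : (Fin n → ℝ) → (Fin m → ℝ) → ℝ) (V : (Fin n → ℝ) → ℝ) (γ : ℝ)
    (hg : IsCPWA2 g) (hV : IsCPWA V)
    (W : Type) [Fintype W] (p : W → ℝ)
    (f : W → (((Fin n → ℝ) × (Fin m → ℝ)) →ᵃ[ℝ] (Fin n → ℝ)))
    (q : ℕ) (A : Fin q → Fin m → ℝ) (b : Fin q → ℝ)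
    (hne : {u : Fin m → ℝ | ∀ i, (∑ j, A i j * u j) ≤ b i}.Nonempty)
    (hcpt : IsCompact {u : Fin m → ℝ | ∀ i, (∑ j, A i j * u j) ≤ b i}) :
    ∃ (μ : (Fin n → ℝ) → (Fin m → ℝ)) (r : ℕ)
      (μs : Fin r → ((Fin n → ℝ) →ᵃ[ℝ] (Fin m → ℝ))),
      ∀ x : Fin n → ℝ,
        μ x ∈ {u : Fin m → ℝ | ∀ i, (∑ j, A i j * u j) ≤ b i} ∧
        (∀ u ∈ {u : Fin m → ℝ | ∀ i, (∑ j, A i j * u j) ≤ b i},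
          ∑ w, p w * (g x u + γ * V (f w (x, u))) ≤
            ∑ w, p w * (g x (μ x) + γ * V (f w (x, μ x)))) ∧
        ∃ j : Fin r, μ x = μs j x := by
  let a : Fin q → (Fin m → ℝ) →ᵃ[ℝ] ℝ := fun i =>
    (dotProductBilin ℝ ℝ (A i)).toAffineMap - AffineMap.const ℝ _ (b i)
  have hU : {u : Fin m → ℝ | ∀ i, (∑ j, A i j * u j) ≤ b i} = polyhedron a := by
    ext u
    simp [polyhedron, a, dotProduct]
  have hJ : IsPiecewiseAffine fun z : (Fin n → ℝ) × (Fin m → ℝ) =>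
      ∑ w, p w * (g z.1 z.2 + γ * V (f w z)) :=
    IsPiecewiseAffine.sum _ fun w _ =>
      (hg.isPiecewiseAffine.add ((hV.isPiecewiseAffine.comp (f w)).const_mul γ)).const_mul (p w)
  have hJc (x : Fin n → ℝ) : Continuous fun u => ∑ w, p w * (g x u + γ * V (f w (x, u))) := by
    have hgx : Continuous (g x) := hg.1.comp (Continuous.prodMk_right x)
    have hf (w : W) := (f w).continuous_of_finiteDimensional
    have hVc := hV.1
    fun_prop
  rw [hU] at hne hcpt ⊢
  obtain ⟨μ, r, μs, hμ⟩ := exists_affine_selection_isMaxOn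
    (J := fun x u => ∑ w, p w * (g x u + γ * V (f w (x, u)))) hJ hJc hcpt hne
  exact ⟨μ, r, μs, fun x => ⟨(hμ x).1, isMaxOn_iff.mp (hμ x).2.1, (hμ x).2.2⟩⟩

/-- Lemma 1, policy part: with a continuous piecewise affine stage cost `g`, a continuous
piecewise affine value function `V`, discount `γ ≥ 0`, a finitely supported disturbance
`w ∈ W` with probabilities `p w` and affine dynamics `f w`, and a nonempty compact
polyhedral feasible set `U = {u | ∀ i, ⟨A i, u⟩ ≤ b i}`, there exists a policy
`μ : ℝ^n → ℝ^m` and finitely many affine maps `μ₁, …, μ_r` such that for every `x`,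
`μ(x)` is feasible, `μ(x)` maximizes the Bellman objective
`Σ_w p w · (g(x,u) + γ · V(f_w(x,u)))` over `U`, and `μ(x) = μ_j(x)` for some `j`:
a piecewise linear value function admits a piecewise linear optimal policy. -/
theorem bellman_pwa_optimal_policy {n m : ℕ}
    (g : (Fin n → ℝ) → (Fin m → ℝ) → ℝ) (V : (Fin n → ℝ) → ℝ) (γ : ℝ)
    (hg : IsCPWA2 g) (hV : IsCPWA V) (hγ : 0 ≤ γ)
    (W : Type) [Fintype W] (p : W → ℝ) (hp : ∀ w, 0 ≤ p w) (hpsum : ∑ w, p w = 1)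
    (f : W → (((Fin n → ℝ) × (Fin m → ℝ)) →ᵃ[ℝ] (Fin n → ℝ)))
    (q : ℕ) (A : Fin q → Fin m → ℝ) (b : Fin q → ℝ)
    (hne : {u : Fin m → ℝ | ∀ i, (∑ j, A i j * u j) ≤ b i}.Nonempty)
    (hcpt : IsCompact {u : Fin m → ℝ | ∀ i, (∑ j, A i j * u j) ≤ b i}) :
    ∃ (μ : (Fin n → ℝ) → (Fin m → ℝ)) (r : ℕ)
      (μs : Fin r → ((Fin n → ℝ) →ᵃ[ℝ] (Fin m → ℝ))),
      ∀ x : Fin n → ℝ,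
        μ x ∈ {u : Fin m → ℝ | ∀ i, (∑ j, A i j * u j) ≤ b i} ∧
        (∀ u ∈ {u : Fin m → ℝ | ∀ i, (∑ j, A i j * u j) ≤ b i},
          ∑ w, p w * (g x u + γ * V (f w (x, u))) ≤
            ∑ w, p w * (g x (μ x) + γ * V (f w (x, μ x)))) ∧
        ∃ j : Fin r, μ x = μs j x :=
  bellman_pwa_optimal_policy_general g V γ hg hV W p f q A b hne hcpt
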